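/- For every pair (i, i') ∈ A and every j ∈ F(i), either (j, ψ(j)) ∈ A or ψ(j) = j. -/
import Mathlib


/- Finite integer intervals: `none` = empty set, `some (l, r)` with `l ≤ r`
represents the interval {l, ..., r}. -/

namespace RFI

abbrev State := Option (ℤ × ℤ)

/-- The reflection ρ about -1/2: ρ({l, ..., r}) = {-1-r, ..., -1-l}, ρ(∅) = ∅. -/
def rho : State → State
  | none => none
  | some (l, r) => some (-1 - r, -1 - l)

/-- The set of integers represented by a state. -/
def toSet : State → Set ℤ
  | none => ∅
  | some (l, r) => Set.Icc l r

/-- A state is valid when it is the empty set or a nonempty interval `some (l, r)`,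
`l ≤ r`. -/
def IsValid (s : State) : Prop := s = none ∨ ∃ l r : ℤ, l ≤ r ∧ s = some (l, r)

/-- The pair (i, i') belongs to A: i' = ρ(i), and either i = i' = ∅, or i is a
nonempty interval with L(i) ≤ -1 and R(i) ≤ -1 - L(i). -/
def memA (i i' : State) : Prop :=
  i' = rho i ∧
    (i = none ∨ ∃ l r : ℤ, l ≤ r ∧ i = some (l, r) ∧ l ≤ -1 ∧ r ≤ -1 - l)

/-- `j ∈ F(i)`: j is an integer subinterval of i, including the empty set. -/
def memF (i j : State) : Prop := IsValid j ∧ toSet j ⊆ toSet i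

open Classical in
/-- The map ψ : F(i) → F(i'): ψ(j) = j if j = ∅ or j ⊆ i ∩ i', and ψ(j) = ρ(j)
otherwise. -/
noncomputable def psi (i i' j : State) : State :=
  if j = none ∨ toSet j ⊆ toSet i ∩ toSet i' then j else rho j

/-- for every (i, i') ∈ A and every j ∈ F(i), either
(j, ψ(j)) ∈ A or ψ(j) = j. -/
theorem psi_alternative (i i' : State) (hA : memA i i') (j : State) (hj : memF i j) :
    memA j (psi i i' j) ∨ psi i i' j = j := by
  obtain ⟨hrho, hcase⟩ := hA
  obtain ⟨hjv, hsub⟩ := hj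
  rcases hjv with hjn | ⟨a, b, hab, hjeq⟩
  · right; simp [psi, hjn]
  subst hjeq
  by_cases hc : (some (a,b) : State) = none ∨ toSet (some (a,b)) ⊆ toSet i ∩ toSet i'
  · right; simp only [psi, if_pos hc]
  · left
    rw [psi, if_neg hc]
    push_neg at hc
    obtain ⟨-, hns⟩ := hc
    rcases hcase with hi | ⟨l, r, hlr, hieq, hl, hr⟩
    · exfalso
      have := hsub (Set.left_mem_Icc.mpr hab)
      simp [hi, toSet] at this
    subst hieq; subst hrho
    refine ⟨rfl, Or.inr ⟨a, b, hab, rfl, ?_, ?_⟩⟩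
    all_goals {
      obtain ⟨x, hx, hx2⟩ := Set.not_subset.mp hns
      have h1 := hsub (Set.left_mem_Icc.mpr hab)
      have h2 := hsub (Set.right_mem_Icc.mpr hab)
      simp only [toSet, rho, Set.mem_Icc, Set.mem_inter_iff, not_and, not_le] at hx hx2 h1 h2
      omega }

end RFI
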